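/- Suppose (a_*, a'_*) ∈ 𝔖_r^M × 𝔖_r^M satisfies for some k and a: (a_k, a_{k+1}) = (a, a+2), (a'_k, a'_{k+1}) = (a+1, a+1), and a_s = a'_s for s ≠ k, k+1. Then at least one of the following holds: (i) (a_*, a'_*) is induced; (ii) for t sufficiently large, (a'_*^{!t}, a_*^{!t}) is induced; (iii) (a_*, a'_*) is equivalent (under simultaneously prepending 0,0 to both sequences and incrementing all entries by 1) to one of the pairs ((0,2),(1,1)), ((0,0,2),(0,1,1)), ((0,2,2),(1,1,2)), ((0,0,2,2),(0,1,1,2)). -/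

import Mathlib

/-- 𝔗_r^m : strictly increasing length-m sequences of naturals summing to r + m(m-1)/2. -/
def TT (r m : ℕ) : Set (List ℕ) :=
  {l | l.length = m ∧ l.Pairwise (· < ·) ∧ l.sum = r + m * (m - 1) / 2}

/-- Complement of `l` in `{0,1,...,t}`: remove `t - a` for each entry `a` of `l`. -/
def complA (t : ℕ) (l : List ℕ) : List ℕ :=
  (List.range (t + 1)).filter (fun x => decide ((t - x) ∉ l))

/-- 𝔖_r^M (for given ε): weakly increasing length-M sequences, each value occurring
at most twice, with sum r + (M² - 2M + ε)/4. -/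
def SS (r M ε : ℕ) : Set (List ℕ) :=
  {l | l.length = M ∧ l.Pairwise (· ≤ ·) ∧ (∀ x, l.count x ≤ 2) ∧
    l.sum = r + (M ^ 2 - 2 * M + ε) / 4}

/-- Complement of `l` in the multiset `{0,0,1,1,...,t,t}`, as a sorted list. -/
def complB (t : ℕ) (l : List ℕ) : List ℕ :=
  (List.range (t + 1)).flatMap (fun x => List.replicate (2 - l.count (t - x)) x)

/-- Subtract 1 from each of the last `k` entries. -/
def decLast (k : ℕ) (l : List ℕ) : List ℕ :=
  l.take (l.length - k) ++ (l.drop (l.length - k)).map (fun x => x - 1)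

def InducedT (r : ℕ) (l l' : List ℕ) : Prop :=
  ∃ k₀, 1 ≤ k₀ ∧ k₀ ≤ r ∧ decLast k₀ l ∈ TT (r - k₀) l.length ∧
    decLast k₀ l' ∈ TT (r - k₀) l'.length

def InducedS (r ε : ℕ) (l l' : List ℕ) : Prop :=
  ∃ k₀, 1 ≤ k₀ ∧ k₀ ≤ r ∧ decLast k₀ l ∈ SS (r - k₀) l.length ε ∧
    decLast k₀ l' ∈ SS (r - k₀) l'.length ε

def shA (l : List ℕ) : List ℕ := 0 :: l.map (· + 1)
def shS (l : List ℕ) : List ℕ := 0 :: 0 :: l.map (· + 1)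

def EquivA (l l' : List ℕ) : Prop := ∃ i j, shA^[i] l = shA^[j] l'
def EquivS (l l' : List ℕ) : Prop := ∃ i j, shS^[i] l = shS^[j] l'

def PairEquivA (p q : List ℕ × List ℕ) : Prop :=
  ∃ i j, shA^[i] p.1 = shA^[j] q.1 ∧ shA^[i] p.2 = shA^[j] q.2
def PairEquivS (p q : List ℕ × List ℕ) : Prop :=
  ∃ i j, shS^[i] p.1 = shS^[j] q.1 ∧ shS^[i] p.2 = shS^[j] q.2

/-- The pattern: entries (a, a+p) in `l` and (a+1, a+p-1) in `l'` at the same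
consecutive positions, all other entries equal. -/
def PairP (p : ℕ) (l l' : List ℕ) : Prop :=
  ∃ a u v, l = u ++ [a, a + p] ++ v ∧ l' = u ++ [a + 1, a + p - 1] ++ v

/-- (b, b+2, b+3, ..., b+p-2, b+p) -/
def listA (p b : ℕ) : List ℕ :=
  (b :: (List.range (p - 3)).map (fun i => b + 2 + i)) ++ [b + p]
/-- (b+1, b+2, ..., b+p-1) -/
def listA' (p b : ℕ) : List ℕ :=
  (List.range (p - 1)).map (fun i => b + 1 + i)

/-- (b, b+1, b+2, b+2, ..., b+p-2, b+p-2, b+p-1, b+p) -/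
def listB (p b : ℕ) : List ℕ :=
  b :: (b + 1) :: ((List.range (p - 3)).flatMap fun i => [b + 2 + i, b + 2 + i]) ++
    [b + p - 1, b + p]
/-- (b+1, b+1, b+2, b+2, ..., b+p-1, b+p-1) -/
def listB' (p b : ℕ) : List ℕ :=
  (List.range (p - 1)).flatMap fun i => [b + 1 + i, b + 1 + i]

/-- The multiset of parts (a_i - i), zero parts removed. -/
def partsOf (l : List ℕ) : Multiset ℕ :=
  ↑((((List.range l.length).zip l).map fun p => p.2 - p.1).filter fun x => decide (x ≠ 0))

/-- Conjugate (transpose) of a multiset of parts. -/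
def conjParts (s : Multiset ℕ) : Multiset ℕ :=
  Multiset.filter (fun x => x ≠ 0)
    ↑((List.range s.sum).map fun j => Multiset.card (Multiset.filter (fun x => j + 1 ≤ x) s))

/-!
Cutting a sequence at a level `w` and lowering every entry above `w` by one keeps it in `𝔖`
as soon as at most two entries lie in `{w, w + 1}`; the excess drops by the number `k` of
lowered entries, and `k ≤ r` because no sequence sums to less than `∑ i < M, ⌊i/2⌋`. For a cut
avoiding the modified positions, `k` is the same for `a_*` and `a'_*`, so the pair is induced.
When such a cut next to the modified pair is crowded, the complements in `{0,0,1,1,…,t,t}` are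
sparse at the mirrored level, so the complementary pair is induced. What is left either starts
with `0, 0`, and is then a shift of a shorter pair of the same shape, or is one of the four
exceptional pairs.
-/

open List

def minSum (m : ℕ) : ℕ := ∑ i ∈ Finset.range m, i / 2

theorem four_mul_minSum (m : ℕ) : 4 * minSum m + 2 * m = m ^ 2 + m % 2 := by
  induction m with
  | zero => rfl
  | succ m ih =>
    rw [minSum, Finset.sum_range_succ, ← minSum]
    have hsq : (m + 1) ^ 2 = m ^ 2 + 2 * m + 1 := by ring
    omega

theorem SS_offset_eq_minSum {M ε : ℕ} (hM : M % 2 = ε) :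
    (M ^ 2 - 2 * M + ε) / 4 = minSum M := by
  have := four_mul_minSum M
  omega

theorem mem_SS_iff {r M ε : ℕ} {L : List ℕ} (hM : M % 2 = ε) :
    L ∈ SS r M ε ↔ L.length = M ∧ L.Pairwise (· ≤ ·) ∧ (∀ x, L.count x ≤ 2) ∧
      L.sum = r + minSum M := by
  rw [SS, Set.mem_ofPred_eq, SS_offset_eq_minSum hM]

theorem length_le_of_count_le_two {L : List ℕ} {b : ℕ} (hb : ∀ x ∈ L, x ≤ b)
    (hc : ∀ x, L.count x ≤ 2) : L.length ≤ 2 * (b + 1) := by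
  have hcard := Multiset.sum_count_eq_card (s := Finset.range (b + 1)) (m := (L : Multiset ℕ))
    (fun x hx => Finset.mem_range.2 (Nat.lt_succ_of_le (hb x hx)))
  calc L.length = ∑ x ∈ Finset.range (b + 1), L.count x := by simpa using hcard.symm
    _ ≤ ∑ _x ∈ Finset.range (b + 1), 2 := Finset.sum_le_sum fun x _ => hc x
    _ = 2 * (b + 1) := by simp [mul_comm]

theorem minSum_length_le_sum {L : List ℕ} (hs : L.Pairwise (· ≤ ·)) (hc : ∀ x, L.count x ≤ 2) :
    minSum L.length ≤ L.sum := by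
  induction L using List.reverseRecOn with
  | nil => rfl
  | append_singleton L b ih =>
    have hLb : ∀ x ∈ L ++ [b], x ≤ b := by
      simp only [mem_append, mem_singleton]
      rintro x (hx | rfl)
      · exact List.pairwise_append.1 hs |>.2.2 x hx b (mem_singleton_self b)
      · exact le_rfl
    have hlen := length_le_of_count_le_two hLb hc
    have := ih (hs.sublist (sublist_append_left _ _))
      fun x => (Sublist.count_le x (sublist_append_left _ _)).trans (hc x)
    rw [length_append, length_singleton, minSum, Finset.sum_range_succ, ← minSum, sum_append,
      sum_singleton]
    simp only [length_append, length_singleton] at hlen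
    omega

theorem exists_append_of_pairwise_le (w : ℕ) :
    ∀ {L : List ℕ}, L.Pairwise (· ≤ ·) →
      ∃ P S, L = P ++ S ∧ (∀ x ∈ P, x ≤ w) ∧ ∀ y ∈ S, w < y
  | [], _ => ⟨[], [], rfl, by simp, by simp⟩
  | x :: L, h => by
    obtain ⟨hx, hL⟩ := pairwise_cons.1 h
    by_cases hxw : x ≤ w
    · obtain ⟨P, S, rfl, hP, hS⟩ := exists_append_of_pairwise_le w hL
      exact ⟨x :: P, S, rfl, by simpa [hxw] using hP, hS⟩
    · refine ⟨[], x :: L, rfl, by simp, ?_⟩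
      simp only [mem_cons, forall_eq_or_imp]
      exact ⟨by omega, fun y hy => by have := hx y hy; omega⟩

theorem countP_lt_append {P S : List ℕ} {w : ℕ} (hP : ∀ x ∈ P, x ≤ w) (hS : ∀ y ∈ S, w < y) :
    (P ++ S).countP (w < ·) = S.length := by
  rw [countP_append, countP_eq_zero.2 (by simpa using hP), countP_eq_length.2 (by simpa using hS),
    zero_add]

theorem decLast_append (P S : List ℕ) :
    decLast S.length (P ++ S) = P ++ S.map (· - 1) := by
  simp [decLast]

theorem sum_map_pred_add_countP (S : List ℕ) :
    (S.map (· - 1)).sum + S.countP (0 < ·) = S.sum := by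
  induction S with
  | nil => rfl
  | cons x S ih => cases x <;> simp <;> omega

theorem pairwise_append_map_pred {P S : List ℕ} {w : ℕ} (hsort : (P ++ S).Pairwise (· ≤ ·))
    (hP : ∀ x ∈ P, x ≤ w) (hS : ∀ y ∈ S, w < y) : (P ++ S.map (· - 1)).Pairwise (· ≤ ·) := by
  obtain ⟨hPs, hSs, -⟩ := pairwise_append.1 hsort
  refine pairwise_append.2 ⟨hPs, hSs.map _ fun a b hab => Nat.sub_le_sub_right hab 1, ?_⟩
  simp only [mem_map]
  rintro x hx _ ⟨y, hy, rfl⟩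
  have := hP x hx; have := hS y hy; omega

theorem count_append_map_pred_le_two {P S : List ℕ} {w : ℕ} (hc : ∀ x, (P ++ S).count x ≤ 2)
    (hcnt : (P ++ S).count w + (P ++ S).count (w + 1) ≤ 2)
    (hP : ∀ x ∈ P, x ≤ w) (hS : ∀ y ∈ S, w < y) (z : ℕ) :
    (P ++ S.map (· - 1)).count z ≤ 2 := by
  have hSz : (S.map (· - 1)).count z = S.count (z + 1) := by
    rw [count_eq_countP, countP_map, count_eq_countP]
    exact countP_congr fun y hy => by
      have := hS y hy; simp only [Function.comp_apply, beq_iff_eq]; omega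
  have h₀ := count_append (l₁ := P) (l₂ := S) (a := z)
  have h₁ := count_append (l₁ := P) (l₂ := S) (a := z + 1)
  rw [count_append, hSz]
  rcases lt_trichotomy z w with h | rfl | h
  · have : S.count (z + 1) = 0 := count_eq_zero.2 fun hz => by have := hS _ hz; omega
    have := hc z; omega
  · omega
  · have : P.count z = 0 := count_eq_zero.2 fun hz => by have := hP _ hz; omega
    have := hc (z + 1); omega

theorem decLast_countP_mem_SS {r M ε w : ℕ} {L : List ℕ} (hM : M % 2 = ε) (hL : L ∈ SS r M ε)
    (hcnt : L.count w + L.count (w + 1) ≤ 2) (hex : ∃ y ∈ L, w < y) :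
    1 ≤ L.countP (w < ·) ∧ L.countP (w < ·) ≤ r ∧
      decLast (L.countP (w < ·)) L ∈ SS (r - L.countP (w < ·)) M ε := by
  obtain ⟨rfl, hsort, hcount, hsum⟩ := (mem_SS_iff hM).1 hL
  obtain ⟨P, S, rfl, hP, hS⟩ := exists_append_of_pairwise_le w hsort
  rw [countP_lt_append hP hS, decLast_append]
  have hSpos : S.countP (0 < ·) = S.length := countP_eq_length.2 fun y hy => by
    simpa using Nat.zero_lt_of_lt (hS y hy)
  have hsort' := pairwise_append_map_pred hsort hP hS
  have hcount' := count_append_map_pred_le_two hcount hcnt hP hS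
  have hlen' : (P ++ S.map (· - 1)).length = (P ++ S).length := by simp
  have hsum' := sum_map_pred_add_countP S
  have hmin := minSum_length_le_sum hsort' hcount'
  rw [hlen'] at hmin
  simp only [sum_append] at hsum hmin
  have hne : 1 ≤ S.length := by
    obtain ⟨y, hy, hwy⟩ := hex
    rcases mem_append.1 hy with h | h
    · exact absurd (hP y h) (by omega)
    · exact length_pos_of_mem h
  exact ⟨hne, by omega, (mem_SS_iff hM).2 ⟨hlen', hsort', hcount', by rw [sum_append]; omega⟩⟩

theorem inducedS_of_cut {r M ε w : ℕ} {l l' : List ℕ} (hM : M % 2 = ε)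
    (hl : l ∈ SS r M ε) (hl' : l' ∈ SS r M ε)
    (hcnt : l.count w + l.count (w + 1) ≤ 2) (hcnt' : l'.count w + l'.count (w + 1) ≤ 2)
    (hex : ∃ y ∈ l, w < y) (hk : l.countP (w < ·) = l'.countP (w < ·)) :
    InducedS r ε l l' := by
  obtain ⟨h1, h2, h3⟩ := decLast_countP_mem_SS hM hl hcnt hex
  have hex' : ∃ y ∈ l', w < y := by
    simpa using countP_pos_iff.1 (hk ▸ h1 : 0 < l'.countP (w < ·))
  obtain ⟨-, -, h3'⟩ := decLast_countP_mem_SS hM hl' hcnt' hex'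
  rw [← hk] at h3'
  exact ⟨_, h1, h2, hl.1 ▸ h3, hl'.1 ▸ h3'⟩

theorem count_complB (t : ℕ) (l : List ℕ) (z : ℕ) :
    (complB t l).count z = if z ≤ t then 2 - l.count (t - z) else 0 := by
  have key (g : ℕ → ℕ) (m : ℕ) : ((range m).flatMap fun x => replicate (g x) x).count z =
      if z < m then g z else 0 := by
    induction m with
    | zero => simp
    | succ m ih =>
      rw [range_succ, flatMap_append, count_append, ih, flatMap_singleton, count_replicate]
      rcases lt_trichotomy z m with h | rfl | h
      · simp [h, h.trans (Nat.lt_succ_self m), h.ne']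
      · simp
      · simp [show m ≠ z by omega, show ¬ z < m + 1 by omega, show ¬ z < m by omega]
  simpa [complB, Nat.lt_succ_iff] using key (fun x => 2 - l.count (t - x)) (t + 1)

theorem pairwise_complB (t : ℕ) (l : List ℕ) : (complB t l).Pairwise (· ≤ ·) := by
  refine pairwise_flatMap.2 ⟨fun x _ => pairwise_replicate.2 (Or.inr le_rfl), ?_⟩
  refine (pairwise_lt_range).imp fun hxy a ha b hb => ?_
  rw [eq_of_mem_replicate ha, eq_of_mem_replicate hb]
  exact hxy.le

-- `complB t []` is the full multiset `{0,0,1,1,…,t,t}`.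
theorem complB_append_map_perm {t : ℕ} {l : List ℕ} (ht : ∀ x ∈ l, x ≤ t)
    (hc : ∀ x, l.count x ≤ 2) : (complB t l ++ l.map (t - ·)).Perm (complB t []) := by
  refine perm_iff_count.2 fun z => ?_
  have hmap : (l.map (t - ·)).count z = if z ≤ t then l.count (t - z) else 0 := by
    rw [count_eq_countP, countP_map]
    split_ifs with hz
    · rw [count_eq_countP]
      exact countP_congr fun x hx => by
        have := ht x hx; simp only [Function.comp_apply, beq_iff_eq]; omega
    · exact countP_eq_zero.2 fun x _ => by simp only [Function.comp_apply, beq_iff_eq]; omega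
  rw [count_append, count_complB, count_complB, hmap, count_nil]
  have := hc (t - z)
  split_ifs <;> omega

theorem length_complB_nil (t : ℕ) : (complB t []).length = 2 * (t + 1) := by
  simp [complB, mul_comm]

theorem sum_complB_nil (t : ℕ) : (complB t []).sum = t * (t + 1) := by
  induction t with
  | zero => rfl
  | succ t ih =>
    have : complB (t + 1) [] = complB t [] ++ [t + 1, t + 1] := by
      simp [complB, range_succ]
    rw [this, sum_append, ih]
    simp only [sum_cons, sum_nil]
    ring

theorem sum_map_sub_add_sum {t : ℕ} {l : List ℕ} (ht : ∀ x ∈ l, x ≤ t) :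
    (l.map (t - ·)).sum + l.sum = t * l.length := by
  induction l with
  | nil => simp
  | cons x l ih =>
    simp only [forall_mem_cons] at ht
    simp only [map_cons, sum_cons, length_cons, mul_add, mul_one]
    have := ih ht.2
    have := ht.1
    omega

theorem minSum_two_mul_sub {t M : ℕ} (hM : M ≤ 2 * (t + 1)) :
    minSum (2 * (t + 1) - M) + t * M = t * (t + 1) + minSum M := by
  generalize hK : 2 * (t + 1) - M = K
  have hsum : (M : ℚ) + K = 2 * (t + 1) := by norm_cast; omega
  have hpar : ((K % 2 : ℕ) : ℚ) = (M % 2 : ℕ) := by norm_cast; omega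
  have h₁ : (4 * minSum K + 2 * K : ℚ) = K ^ 2 + (K % 2 : ℕ) := by exact_mod_cast four_mul_minSum K
  have h₂ : (4 * minSum M + 2 * M : ℚ) = M ^ 2 + (M % 2 : ℕ) := by exact_mod_cast four_mul_minSum M
  qify
  -- `K ^ 2 - M ^ 2 = 2 * (t + 1) * (K - M)` since `K + M = 2 * (t + 1)`.
  linear_combination (h₁ - h₂ + hpar) / 4 + (t / 2 + (K - M) / 4) * hsum

theorem complB_mem_SS {r M ε t : ℕ} {l : List ℕ} (hM : M % 2 = ε) (hl : l ∈ SS r M ε)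
    (ht : ∀ x ∈ l, x ≤ t) :
    M ≤ 2 * (t + 1) ∧ complB t l ∈ SS r (2 * (t + 1) - M) ε := by
  obtain ⟨rfl, -, hc, hsum⟩ := (mem_SS_iff hM).1 hl
  have hperm := complB_append_map_perm ht hc
  have hlen := hperm.length_eq
  have hsum' := hperm.sum_eq
  rw [length_append, length_map, length_complB_nil] at hlen
  rw [sum_append, sum_complB_nil] at hsum'
  have hrefl := sum_map_sub_add_sum ht
  have hmin := minSum_two_mul_sub (t := t) (M := l.length) (by omega)
  refine ⟨by omega, (mem_SS_iff (M := 2 * (t + 1) - l.length) (by omega)).2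
    ⟨by omega, pairwise_complB t l, fun x => ?_, by omega⟩⟩
  rw [count_complB]
  split <;> omega

theorem count_complB_sub {t z : ℕ} (l : List ℕ) (hz : z ≤ t) :
    (complB t l).count (t - z) = 2 - l.count z := by
  rw [count_complB, if_pos (Nat.sub_le t z), Nat.sub_sub_self hz]

theorem countP_complB_add_countP {t : ℕ} {l : List ℕ} (ht : ∀ x ∈ l, x ≤ t)
    (hc : ∀ x, l.count x ≤ 2) (p : ℕ → Bool) :
    (complB t l).countP p + l.countP (p ∘ (t - ·)) = (complB t []).countP p := by
  rw [← (complB_append_map_perm ht hc).countP_eq, countP_append, countP_map]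

/-- A cut of `l` at `y` that is too crowded to lower `l` itself becomes, after complementing in
`{0,0,…,t,t}`, a cut at `t - (y + 1)` that can be lowered. -/
theorem inducedS_complB_of_cut {r M ε y : ℕ} {l l' : List ℕ} (hM : M % 2 = ε)
    (hl : l ∈ SS r M ε) (hl' : l' ∈ SS r M ε)
    (hcnt : 2 ≤ l.count y + l.count (y + 1)) (hcnt' : 2 ≤ l'.count y + l'.count (y + 1))
    (hdef : ∃ z ≤ y, l.count z ≤ 1) (hdef' : ∃ z ≤ y, l'.count z ≤ 1)
    (hk : l.countP (· ≤ y) = l'.countP (· ≤ y)) :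
    ∃ T, ∀ t, T ≤ t → InducedS r ε (complB t l') (complB t l) := by
  refine ⟨l.sum + l'.sum + y + 1, fun t ht => ?_⟩
  have hb : ∀ x ∈ l, x ≤ t := fun x hx => (le_sum_of_mem hx).trans (by omega)
  have hb' : ∀ x ∈ l', x ≤ t := fun x hx => (le_sum_of_mem hx).trans (by omega)
  obtain ⟨hMt, hC⟩ := complB_mem_SS hM hl hb
  obtain ⟨-, hC'⟩ := complB_mem_SS hM hl' hb'
  have hw : t - (y + 1) + 1 = t - y := by omega
  have hc := hl.2.2.1
  have hc' := hl'.2.2.1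
  have hreflect : ∀ {m : List ℕ}, (∀ x ∈ m, x ≤ t) →
      m.countP ((t - (y + 1) < ·) ∘ (t - ·)) = m.countP (· ≤ y) := fun hm =>
    countP_congr fun x hx => by have := hm x hx; simp only [Function.comp_apply, decide_eq_true_eq]; omega
  refine inducedS_of_cut (w := t - (y + 1)) (by omega) hC' hC ?_ ?_ ?_ ?_
  · rw [hw, count_complB_sub _ (by omega), count_complB_sub _ (by omega)]
    have := hc' y; have := hc' (y + 1); omega
  · rw [hw, count_complB_sub _ (by omega), count_complB_sub _ (by omega)]
    have := hc y; have := hc (y + 1); omega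
  · obtain ⟨z, hzy, hz⟩ := hdef'
    refine ⟨t - z, count_pos_iff.1 ?_, by omega⟩
    rw [count_complB_sub _ (by omega)]
    omega
  · have e := countP_complB_add_countP hb hc (t - (y + 1) < ·)
    have e' := countP_complB_add_countP hb' hc' (t - (y + 1) < ·)
    rw [hreflect hb] at e
    rw [hreflect hb'] at e'
    omega

theorem shS_map_pred {L : List ℕ} (h : ∀ x ∈ L, 1 ≤ x) : shS (L.map (· - 1)) = 0 :: 0 :: L := by
  rw [shS, map_map]
  congr 2
  exact (map_congr_left fun x hx => Nat.sub_add_cancel (h x hx)).trans (map_id L)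

theorem length_shS (L : List ℕ) : (shS L).length = L.length + 2 := by simp [shS]

theorem sum_shS (L : List ℕ) : (shS L).sum = L.sum + L.length := by
  induction L with
  | nil => rfl
  | cons x L ih => simp only [shS, map_cons, sum_cons, length_cons] at ih ⊢; omega

theorem count_zero_shS (L : List ℕ) : (shS L).count 0 = 2 := by
  simp [shS, count_eq_zero]

theorem count_succ_shS (L : List ℕ) (z : ℕ) : (shS L).count (z + 1) = L.count z := by
  simp [shS, count_map_of_injective _ _ (add_left_injective 1)]

theorem pairwise_shS_iff {L : List ℕ} : (shS L).Pairwise (· ≤ ·) ↔ L.Pairwise (· ≤ ·) := by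
  simp [shS, pairwise_map]

theorem minSum_add_two (M : ℕ) : minSum (M + 2) = minSum M + M := by
  simp only [minSum, Finset.sum_range_succ]
  omega

theorem shS_mem_SS_iff {r M ε : ℕ} {L : List ℕ} (hM : M % 2 = ε) :
    shS L ∈ SS r (M + 2) ε ↔ L ∈ SS r M ε := by
  rw [mem_SS_iff (by omega), mem_SS_iff hM, length_shS, pairwise_shS_iff, sum_shS, minSum_add_two]
  have hcount : (∀ x, (shS L).count x ≤ 2) ↔ ∀ x, L.count x ≤ 2 :=
    ⟨fun h x => count_succ_shS L x ▸ h (x + 1), fun h x => by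
      cases x with
      | zero => exact (count_zero_shS L).le
      | succ x => exact count_succ_shS L x ▸ h x⟩
  rw [hcount]
  constructor
  · rintro ⟨h₁, h₂, h₃, h₄⟩; exact ⟨by omega, h₂, h₃, by omega⟩
  · rintro ⟨rfl, h₂, h₃, h₄⟩; exact ⟨rfl, h₂, h₃, by omega⟩

theorem decLast_shS {k : ℕ} {L : List ℕ} (hk : k ≤ L.length)
    (hpos : ∀ y ∈ L.drop (L.length - k), 1 ≤ y) :
    decLast k (shS L) = shS (decLast k L) := by
  obtain ⟨m, hm⟩ : ∃ m, L.length - k = m := ⟨_, rfl⟩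
  have hm2 : (shS L).length - k = m + 2 := by rw [length_shS]; omega
  rw [hm] at hpos
  have hdrop : ((L.drop m).map (· - 1)).map (· + 1) = L.drop m := by
    rw [map_map]
    exact (map_congr_left fun x hx => Nat.sub_add_cancel (hpos x hx)).trans (map_id _)
  rw [decLast, decLast, hm2, hm, shS, shS, map_append, hdrop]
  simp [← map_take, ← map_drop, Function.comp_def]

-- A lowered `0` stays `0` (truncated subtraction), and then the sum drops by less than `k`.
theorem pos_of_decLast_mem_SS {r M ε k : ℕ} {L : List ℕ} (hL : L ∈ SS r M ε) (hk : k ≤ r)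
    (hdec : decLast k L ∈ SS (r - k) M ε) :
    k ≤ L.length ∧ ∀ y ∈ L.drop (L.length - k), 1 ≤ y := by
  have hsum := hL.2.2.2
  have hsum' := hdec.2.2.2
  rw [decLast, sum_append] at hsum'
  set D := L.drop (L.length - k)
  rw [← take_append_drop (L.length - k) L, sum_append, ← sum_map_pred_add_countP D] at hsum
  have hcount : D.countP (0 < ·) = k := by omega
  have hlen : D.length = L.length - (L.length - k) := length_drop
  have hle : D.countP (0 < ·) ≤ D.length := countP_le_length
  have hall := countP_eq_length.1 (show D.countP (0 < ·) = D.length by omega)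
  exact ⟨by omega, fun y hy => Nat.succ_le_of_lt (by simpa using hall y hy)⟩

theorem complB_shS {t : ℕ} (ht : 1 ≤ t) (L : List ℕ) : complB t (shS L) = complB (t - 1) L := by
  refine (perm_iff_count.2 fun z => ?_).eq_of_pairwise' (pairwise_complB _ _) (pairwise_complB _ _)
  rw [count_complB, count_complB]
  rcases lt_trichotomy z t with h | rfl | h
  · rw [if_pos h.le, if_pos (by omega), show t - z = t - 1 - z + 1 by omega, count_succ_shS]
  · rw [if_pos le_rfl, if_neg (by omega), Nat.sub_self, count_zero_shS]
  · rw [if_neg (by omega), if_neg (by omega)]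

theorem InducedS.shS {r M ε : ℕ} {l l' : List ℕ} (hM : M % 2 = ε) (hl : l ∈ SS r M ε)
    (hl' : l' ∈ SS r M ε) (h : InducedS r ε l l') : InducedS r ε (shS l) (shS l') := by
  obtain ⟨k, hk, hkr, hm, hm'⟩ := h
  obtain ⟨hkl, hpos⟩ := pos_of_decLast_mem_SS hl hkr (hl.1 ▸ hm)
  obtain ⟨hkl', hpos'⟩ := pos_of_decLast_mem_SS hl' hkr (hl'.1 ▸ hm')
  refine ⟨k, hk, hkr, ?_, ?_⟩
  · rwa [length_shS, decLast_shS hkl hpos, shS_mem_SS_iff (hl.1 ▸ hM)]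
  · rwa [length_shS, decLast_shS hkl' hpos', shS_mem_SS_iff (hl'.1 ▸ hM)]

theorem PairEquivS.shS {l l' : List ℕ} {q : List ℕ × List ℕ} (h : PairEquivS (l, l') q) :
    PairEquivS (shS l, shS l') q := by
  obtain ⟨i, j, h₁, h₂⟩ := h
  refine ⟨i, j + 1, ?_, ?_⟩ <;>
    rw [← Function.iterate_succ_apply, Function.iterate_succ_apply', Function.iterate_succ_apply']
  exacts [congrArg _ h₁, congrArg _ h₂]

def InducedOrExceptional (r ε : ℕ) (l l' : List ℕ) : Prop :=
  InducedS r ε l l' ∨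
    (∃ T, ∀ t, T ≤ t → InducedS r ε (complB t l') (complB t l)) ∨
    PairEquivS (l, l') ([0, 2], [1, 1]) ∨
    PairEquivS (l, l') ([0, 0, 2], [0, 1, 1]) ∨
    PairEquivS (l, l') ([0, 2, 2], [1, 1, 2]) ∨
    PairEquivS (l, l') ([0, 0, 2, 2], [0, 1, 1, 2])

theorem InducedOrExceptional.shS {r M ε : ℕ} {l l' : List ℕ} (hM : M % 2 = ε)
    (hl : l ∈ SS r M ε) (hl' : l' ∈ SS r M ε) (h : InducedOrExceptional r ε l l') :
    InducedOrExceptional r ε (shS l) (shS l') := by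
  rcases h with h | ⟨T, hT⟩ | h
  · exact Or.inl (h.shS hM hl hl')
  · refine Or.inr (Or.inl ⟨T + 1, fun t ht => ?_⟩)
    rw [complB_shS (by omega), complB_shS (by omega)]
    exact hT _ (by omega)
  · exact Or.inr (Or.inr (h.imp PairEquivS.shS
      (Or.imp PairEquivS.shS (Or.imp PairEquivS.shS PairEquivS.shS))))

section Pair

variable {u v l l' : List ℕ} {a : ℕ} (hlu : l = u ++ [a, a + 2] ++ v)
  (hlu' : l' = u ++ [a + 1, a + 1] ++ v)
include hlu hlu'

theorem countP_pair_eq {p : ℕ → Bool} (h₁ : p a = p (a + 1)) (h₂ : p (a + 2) = p (a + 1)) :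
    l.countP p = l'.countP p := by
  subst hlu hlu'
  simp [countP_append, countP_cons, h₁, h₂]

theorem count_pair_of_ne {x : ℕ} (h₀ : x ≠ a) (h₁ : x ≠ a + 1) (h₂ : x ≠ a + 2) :
    l'.count x = l.count x := by
  simp only [count_eq_countP]
  exact (countP_pair_eq hlu hlu' (by simp; omega) (by simp; omega)).symm

theorem count_pair_left : l.count a = l'.count a + 1 := by
  subst hlu hlu'; simp; omega

theorem count_pair_right : l.count (a + 2) = l'.count (a + 2) + 1 := by
  subst hlu hlu'; simp; omega

theorem count_pair_mid : l'.count (a + 1) = l.count (a + 1) + 2 := by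
  subst hlu hlu'; simp; omega

end Pair

theorem bounds_of_pairwise_pair {u v : List ℕ} {a b : ℕ}
    (h : (u ++ [a, b] ++ v).Pairwise (· ≤ ·)) : (∀ x ∈ u, x ≤ a) ∧ ∀ y ∈ v, b ≤ y := by
  rw [append_assoc, pairwise_append, cons_append, pairwise_cons, cons_append, pairwise_cons] at h
  exact ⟨fun x hx => h.2.2 x hx a (by simp), fun y hy => h.2.1.2.1 y (by simp [hy])⟩

section Cases

variable {r M ε a : ℕ} {u v l l' : List ℕ} (hM : M % 2 = ε) (hl : l ∈ SS r M ε)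
  (hl' : l' ∈ SS r M ε) (hlu : l = u ++ [a, a + 2] ++ v) (hlu' : l' = u ++ [a + 1, a + 1] ++ v)
include hM hl hl' hlu hlu'

theorem inducedS_or_complB_of_lower (ha : 1 ≤ a) (h0 : l.count 0 ≤ 1) :
    InducedS r ε l l' ∨ ∃ T, ∀ t, T ≤ t → InducedS r ε (complB t l') (complB t l) := by
  have hleft := count_pair_left hlu hlu'
  have hpred := count_pair_of_ne hlu hlu' (x := a - 1) (by omega) (by omega) (by omega)
  have hsub : a - 1 + 1 = a := Nat.sub_add_cancel ha
  by_cases hcnt : l.count (a - 1) + l.count a ≤ 2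
  · left
    refine inducedS_of_cut (w := a - 1) hM hl hl' (hsub ▸ hcnt) (by rw [hsub]; omega)
      ⟨a + 2, by simp [hlu], by omega⟩ (countP_pair_eq hlu hlu' (by simp; omega) (by simp; omega))
  · right
    have hy : l.count (Nat.findGreatest (fun y => l.count y ≤ 1) (a - 1)) ≤ 1 :=
      Nat.findGreatest_spec (P := fun y => l.count y ≤ 1) (Nat.zero_le _) h0
    have hya := Nat.findGreatest_le (P := fun y => l.count y ≤ 1) (a - 1)
    have hmax := fun k => Nat.findGreatest_is_greatest (P := fun y => l.count y ≤ 1) (k := k)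
      (n := a - 1)
    generalize Nat.findGreatest (fun y => l.count y ≤ 1) (a - 1) = y at hy hya hmax
    have hy' := count_pair_of_ne hlu hlu' (x := y) (by omega) (by omega) (by omega)
    have hnext : 2 ≤ l.count (y + 1) ∧ 2 ≤ l'.count (y + 1) ∨ y = a - 1 := by
      rcases Nat.lt_or_ge (y + 1) a with h | h
      · have := hmax (y + 1) (Nat.lt_succ_self y) (by omega)
        have := count_pair_of_ne hlu hlu' (x := y + 1) (by omega) (by omega) (by omega)
        omega
      · omega
    have hcnt' : 2 ≤ l.count y + l.count (y + 1) ∧ 2 ≤ l'.count y + l'.count (y + 1) := by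
      rcases hnext with h | rfl
      · omega
      · rw [hsub]; omega
    exact inducedS_complB_of_cut (y := y) hM hl hl' hcnt'.1 hcnt'.2 ⟨y, le_rfl, hy⟩
      ⟨y, le_rfl, by omega⟩ (countP_pair_eq hlu hlu' (by simp; omega) (by simp; omega))

theorem inducedS_or_complB_of_upper (hv : ∃ y ∈ v, a + 3 ≤ y) :
    InducedS r ε l l' ∨ ∃ T, ∀ t, T ≤ t → InducedS r ε (complB t l') (complB t l) := by
  have hright := count_pair_right hlu hlu'
  have hmid := count_pair_mid hlu hlu'
  have hnext := count_pair_of_ne hlu hlu' (x := a + 2 + 1) (by omega) (by omega) (by omega)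
  obtain ⟨y, hyv, hy⟩ := hv
  by_cases hcnt : l.count (a + 2) + l.count (a + 2 + 1) ≤ 2
  · left
    exact inducedS_of_cut (w := a + 2) hM hl hl' hcnt (by omega) ⟨y, by simp [hlu, hyv], by omega⟩
      (countP_pair_eq hlu hlu' (by simp) (by simp))
  · right
    have hleft := count_pair_left hlu hlu'
    have := hl.2.2.1 a
    have := hl'.2.2.1 (a + 1)
    exact inducedS_complB_of_cut (y := a + 2) hM hl hl' (by omega) (by omega)
      ⟨a + 1, by omega, by omega⟩ ⟨a, by omega, by omega⟩
      (countP_pair_eq hlu hlu' (by simp) (by simp))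

end Cases

theorem pairEquivS_of_le_two {r M ε : ℕ} {u v l l' : List ℕ} (hl : l ∈ SS r M ε)
    (hlu : l = u ++ [0, 2] ++ v) (hlu' : l' = u ++ [1, 1] ++ v) (hv : ∀ y ∈ v, y ≤ 2) :
    PairEquivS (l, l') ([0, 2], [1, 1]) ∨
      PairEquivS (l, l') ([0, 0, 2], [0, 1, 1]) ∨
      PairEquivS (l, l') ([0, 2, 2], [1, 1, 2]) ∨
      PairEquivS (l, l') ([0, 0, 2, 2], [0, 1, 1, 2]) := by
  obtain ⟨hu0, hv2⟩ := bounds_of_pairwise_pair (hlu ▸ hl.2.1)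
  obtain ⟨m, rfl⟩ : ∃ m, u = replicate m 0 :=
    ⟨_, eq_replicate_iff.2 ⟨rfl, fun x hx => Nat.le_zero.1 (hu0 x hx)⟩⟩
  obtain ⟨n, rfl⟩ : ∃ n, v = replicate n 2 :=
    ⟨_, eq_replicate_iff.2 ⟨rfl, fun y hy => le_antisymm (hv y hy) (hv2 y hy)⟩⟩
  have h0 := hl.2.2.1 0
  have h2 := hl.2.2.1 2
  simp [hlu, count_replicate] at h0 h2
  obtain hn : n ≤ 1 := by omega
  interval_cases m <;> interval_cases n <;> subst hlu hlu'
  exacts [Or.inl ⟨0, 0, rfl, rfl⟩, Or.inr (Or.inr (Or.inl ⟨0, 0, rfl, rfl⟩)),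
    Or.inr (Or.inl ⟨0, 0, rfl, rfl⟩), Or.inr (Or.inr (Or.inr ⟨0, 0, rfl, rfl⟩))]

theorem exists_eq_zero_zero_cons {u : List ℕ} (hs : u.Pairwise (· ≤ ·)) (h : u.count 0 = 2) :
    ∃ w, u = 0 :: 0 :: w ∧ ∀ x ∈ w, 1 ≤ x := by
  match u, hs, h with
  | [], _, h => simp at h
  | [x], _, h => have := h ▸ count_le_length (a := 0) (l := [x]); simp at this
  | x :: y :: w, hs, h =>
    have hx := (pairwise_cons.1 hs).1 y mem_cons_self
    have hy := (pairwise_cons.1 (pairwise_cons.1 hs).2).1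
    simp only [count_cons, beq_iff_eq] at h
    obtain rfl : y = 0 := by
      by_contra hne
      have : w.count 0 = 0 := count_eq_zero.2 fun h0 => hne (Nat.le_zero.1 (hy 0 h0))
      split_ifs at h <;> omega
    obtain rfl : x = 0 := Nat.le_zero.1 hx
    have hw : w.count 0 = 0 := by simpa using h
    exact ⟨w, rfl, fun z hz => Nat.pos_of_ne_zero fun hz0 => count_eq_zero.1 hw (hz0 ▸ hz)⟩

theorem exists_shS_of_count_zero {u v l l' : List ℕ} {a : ℕ} (hlu : l = u ++ [a, a + 2] ++ v)
    (hlu' : l' = u ++ [a + 1, a + 1] ++ v) (hs : l.Pairwise (· ≤ ·)) (ha : 1 ≤ a)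
    (h0 : l.count 0 = 2) : ∃ l₀ l₀', l = shS l₀ ∧ l' = shS l₀' ∧ PairP 2 l₀ l₀' := by
  obtain ⟨-, hva⟩ := bounds_of_pairwise_pair (hlu ▸ hs)
  have hu0 : u.count 0 = 2 := by
    have hv0 : v.count 0 = 0 := count_eq_zero.2 fun h => by have := hva 0 h; omega
    simpa [hlu, hv0, show a ≠ 0 by omega] using h0
  obtain ⟨w, rfl, hw⟩ := exists_eq_zero_zero_cons
    (Pairwise.sublist ((sublist_append_left u _).trans (sublist_append_left _ v)) (hlu ▸ hs)) hu0
  have hshift : ∀ c d, 1 ≤ c → 1 ≤ d → (0 :: 0 :: w) ++ [c, d] ++ v =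
      shS (w.map (· - 1) ++ [c - 1, d - 1] ++ v.map (· - 1)) := fun c d hc hd => by
    have hpos : ∀ x ∈ w ++ [c, d] ++ v, 1 ≤ x := fun x hx => by
      simp only [mem_append, mem_cons, mem_nil_iff, or_false] at hx
      rcases hx with (hx | rfl | rfl) | hx
      exacts [hw x hx, hc, hd, by have := hva x hx; omega]
    simp only [cons_append]
    rw [← shS_map_pred hpos]
    simp
  obtain ⟨b, rfl⟩ : ∃ b, a = b + 1 := ⟨a - 1, by omega⟩
  exact ⟨_, _, hlu.trans (hshift _ _ (by omega) (by omega)),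
    hlu'.trans (hshift _ _ (by omega) (by omega)), b, _, _, rfl, rfl⟩

theorem inducedOrExceptional_of_PairP {r ε : ℕ} (M : ℕ) {l l' : List ℕ} (hM : M % 2 = ε)
    (hl : l ∈ SS r M ε) (hl' : l' ∈ SS r M ε) (hP : PairP 2 l l') :
    InducedOrExceptional r ε l l' := by
  induction M using Nat.strong_induction_on generalizing l l' with
  | _ M ih =>
  obtain ⟨a, u, v, hlu, hlu'⟩ := hP
  replace hlu' : l' = u ++ [a + 1, a + 1] ++ v := hlu'
  rcases Nat.eq_zero_or_pos a with rfl | ha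
  · by_cases hv : ∃ y ∈ v, 3 ≤ y
    · exact (inducedS_or_complB_of_upper hM hl hl' hlu hlu' hv).elim Or.inl (Or.inr ∘ Or.inl)
    · push Not at hv
      exact Or.inr (Or.inr (pairEquivS_of_le_two hl hlu hlu' fun y hy => Nat.lt_succ_iff.1 (hv y hy)))
  by_cases h0 : l.count 0 ≤ 1
  · exact (inducedS_or_complB_of_lower hM hl hl' hlu hlu' ha h0).elim Or.inl (Or.inr ∘ Or.inl)
  obtain ⟨l₀, l₀', rfl, rfl, hP₀⟩ :=
    exists_shS_of_count_zero hlu hlu' hl.2.1 ha (by have := hl.2.2.1 0; omega)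
  obtain ⟨m, rfl⟩ : ∃ m, M = m + 2 := ⟨M - 2, by have := hl.1; rw [length_shS] at this; omega⟩
  rw [shS_mem_SS_iff (by omega)] at hl hl'
  exact (ih m (by omega) (by omega) hl hl' hP₀).shS (by omega) hl hl'

theorem stmt10 (r M ε : ℕ) (hε : ε ≤ 1) (hM : ∃ n, M = ε + 2 * n)
    (l l' : List ℕ) (hl : l ∈ SS r M ε) (hl' : l' ∈ SS r M ε) (hP : PairP 2 l l') :
    InducedS r ε l l' ∨
    (∃ T, ∀ t, T ≤ t → InducedS r ε (complB t l') (complB t l)) ∨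
    PairEquivS (l, l') ([0, 2], [1, 1]) ∨
    PairEquivS (l, l') ([0, 0, 2], [0, 1, 1]) ∨
    PairEquivS (l, l') ([0, 2, 2], [1, 1, 2]) ∨
    PairEquivS (l, l') ([0, 0, 2, 2], [0, 1, 1, 2]) := by
  obtain ⟨n, rfl⟩ := hM
  exact inducedOrExceptional_of_PairP _ (by omega) hl hl' hP
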